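/- arXiv:1707.04663 — 3 statements merged into one kernel-verified Lean document; each statement's English description precedes it below -/
import Mathlib

section
/- If W is a set of mutually disjoint positive elements in a universally complete Riesz space E, and R is a Dedekind complete Riesz subspace of E closed under countable suprema that contains u ∧ n·e for every u ∈ W and n ∈ ℕ (where e is a weak order unit of E in R), then the supremum of W belongs to R whenever for each n the family {u ∧ n·e : u ∈ W} has its supremum in R and these suprema increase to an element of R. -/
/-! Truncation by `n • e` commutes with `sSup W`: infinite distributivity holds in every
conditionally complete lattice-ordered group, because `(s ⊓ a) + (s ⊔ a) = s + a`. Hence `sSup W`,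
the supremum of its own truncations, is the supremum of the sequence assumed to lie in `R`. -/

lemma csSup_inf_eq_csSup_image {E : Type*} [ConditionallyCompleteLattice E] [AddCommGroup E]
    [AddLeftMono E] (a : E) {S : Set E} (hne : S.Nonempty) (hbdd : BddAbove S) :
    sSup S ⊓ a = sSup ((· ⊓ a) '' S) := by
  have hbdd_image : BddAbove ((· ⊓ a) '' S) := (monotone_id.inf monotone_const).map_bddAbove hbdd
  set c := sSup ((· ⊓ a) '' S)
  refine le_antisymm ?_ (csSup_le (hne.image _) ?_)
  · have hS : sSup S ≤ c + (sSup S ⊔ a) - a := by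
      refine csSup_le hne fun s hs => ?_
      calc s = s ⊓ a + (s ⊔ a) - a := by rw [inf_add_sup]; abel
        _ ≤ c + (sSup S ⊔ a) - a := by
          gcongr
          · exact le_csSup hbdd_image ⟨s, hs, rfl⟩
          · exact le_csSup hbdd hs
    calc sSup S ⊓ a = sSup S + a - (sSup S ⊔ a) := by rw [← inf_add_sup (sSup S) a]; abel
      _ ≤ c + (sSup S ⊔ a) - a + a - (sSup S ⊔ a) := by gcongr
      _ = c := by abel
  · rintro _ ⟨s, hs, rfl⟩
    exact inf_le_inf_right a (le_csSup hbdd hs)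

theorem sSup_mem_of_disjoint_truncations_general {E : Type*} [ConditionallyCompleteLattice E]
    [AddCommGroup E] [CovariantClass E E (· + ·) (· ≤ ·)]
    (e : E)
    -- `e` is a weak order unit: every positive element is the supremum of its truncations by `n • e`
    (hwou : ∀ f : E, 0 ≤ f → f = sSup {x : E | ∃ n : ℕ, x = f ⊓ n • e})
    (R : Set E)
    (W : Set E) (hWpos : ∀ u ∈ W, 0 ≤ u)
    (hWbdd : BddAbove W) (hWne : W.Nonempty)
    (hlim : sSup {x : E | ∃ n : ℕ, x = sSup {y : E | ∃ u ∈ W, y = u ⊓ n • e}} ∈ R) :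
    sSup W ∈ R := by
  obtain ⟨u₀, hu₀⟩ := hWne
  have htrunc (n : ℕ) : sSup W ⊓ n • e = sSup {y : E | ∃ u ∈ W, y = u ⊓ n • e} := by
    rw [csSup_inf_eq_csSup_image _ ⟨u₀, hu₀⟩ hWbdd]
    simp only [Set.image, eq_comm]
  rw [hwou _ ((hWpos u₀ hu₀).trans (le_csSup hWbdd hu₀))]
  simpa only [htrunc] using hlim

/-- In a universally complete Riesz space `E` with weak order unit `e`,
if `W` is a set of mutually disjoint positive elements and `R` is a (Dedekind complete)
Riesz subspace containing `u ⊓ n • e` for all `u ∈ W`, `n ∈ ℕ`, then `sSup W ∈ R`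
provided each `sSup {u ⊓ n • e | u ∈ W} ∈ R` and these suprema increase to an element of `R`. -/
theorem sSup_mem_of_disjoint_truncations {E : Type*} [ConditionallyCompleteLattice E]
    [AddCommGroup E] [CovariantClass E E (· + ·) (· ≤ ·)] [Module ℝ E]
    (e : E) (he : 0 ≤ e)
    -- `e` is a weak order unit: every positive element is the supremum of its truncations by `n • e`
    (hwou : ∀ f : E, 0 ≤ f → f = sSup {x : E | ∃ n : ℕ, x = f ⊓ n • e})
    (R : Set E) (heR : e ∈ R)
    (W : Set E) (hWpos : ∀ u ∈ W, 0 ≤ u)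
    (hWdisj : ∀ u ∈ W, ∀ v ∈ W, u ≠ v → u ⊓ v = 0)
    (hWbdd : BddAbove W) (hWne : W.Nonempty)
    (hmem : ∀ u ∈ W, ∀ n : ℕ, u ⊓ n • e ∈ R)
    (hsupn : ∀ n : ℕ, sSup {x : E | ∃ u ∈ W, x = u ⊓ n • e} ∈ R)
    (hlim : sSup {x : E | ∃ n : ℕ, x = sSup {y : E | ∃ u ∈ W, y = u ⊓ n • e}} ∈ R) :
    sSup W ∈ R :=
  sSup_mem_of_disjoint_truncations_general e hwou R W hWpos hWbdd hWne hlim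
end

section
/- Let T be a strictly positive linear order-continuous averaging operator on a Riesz space E which is an R(T)-module, where R(T) is the range of T. Then the map f ↦ T|f| is an R(T)-valued norm: it vanishes only at 0, satisfies T|gf| = |g|·T|f| for all g ∈ R(T), and satisfies the triangle inequality T|f+h| ≤ T|f| + T|h|. -/
/-!
Since `T` is a positive projection, `|g| = |T g| ≤ T|g|` for `g ∈ R(T)`, and strict positivity
applied to `T|g| - |g| ≥ 0` (which `T` kills) forces `T|g| = |g|`, so `|g| ∈ R(T)`. In an
`f`-algebra `|g f| = |g| |f|`, because `g f` is the difference of the disjoint positive elements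
`g⁺f⁺ + g⁻f⁻` and `g⁺f⁻ + g⁻f⁺`. Averaging then gives `T|g f| = T(|g| |f|) = |g| T|f|`; the other
two properties follow from positivity and strict positivity of `T`.
-/

section LatticeOrderedGroup

variable {α : Type*} [Lattice α] [AddCommGroup α] [AddLeftMono α]

lemma add_inf_eq_zero {x y z : α} (hxz : x ⊓ z = 0) (hyz : y ⊓ z = 0) : (x + y) ⊓ z = 0 := by
  have hx : 0 ≤ x := hxz ▸ inf_le_left
  have hy : 0 ≤ y := hyz ▸ inf_le_left
  have hz : 0 ≤ z := hxz ▸ inf_le_right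
  have hle : (x + y) ⊓ z ≤ x := calc
    (x + y) ⊓ z ≤ (x + y) ⊓ (x + z) := inf_le_inf_left _ (le_add_of_nonneg_left hx)
    _ = x := by rw [← add_inf, hyz, add_zero]
  refine le_antisymm ?_ (le_inf (add_nonneg hx hy) hz)
  exact hxz ▸ le_inf hle inf_le_right

lemma abs_sub_of_inf_eq_zero {x y : α} (hxy : x ⊓ y = 0) : |x - y| = x + y := by
  rw [abs_sub_comm, ← sup_sub_inf_eq_abs_sub, hxy, sub_zero, ← inf_add_sup, hxy, zero_add]

lemma monotone_of_map_nonneg {F β : Type*} [AddCommGroup β] [Lattice β] [AddLeftMono β]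
    [FunLike F α β] [AddMonoidHomClass F α β] (f : F) (hf : ∀ a, 0 ≤ a → 0 ≤ f a) :
    Monotone f := fun a b hab => by
  simpa only [map_sub, sub_nonneg] using hf (b - a) (sub_nonneg.2 hab)

end LatticeOrderedGroup

section FAlgebra

variable {E : Type*} [Lattice E] [CommRing E]
  (hdisj : ∀ a b : E, a ⊓ b = 0 → ∀ w : E, 0 ≤ w → (w * a) ⊓ b = 0)
include hdisj

lemma mul_inf_mul_eq_zero {a b u v : E} (hab : a ⊓ b = 0) (hu : 0 ≤ u) (hv : 0 ≤ v) :
    (u * a) ⊓ (v * b) = 0 := by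
  have hua : b ⊓ (u * a) = 0 := inf_comm (u * a) b ▸ hdisj a b hab u hu
  rw [inf_comm]
  exact hdisj b _ hua v hv

lemma abs_mul_of_mul_inf_eq_zero [AddLeftMono E] (a b : E) : |a * b| = |a| * |b| := by
  have hpn (c : E) : c⁺ ⊓ c⁻ = 0 := posPart_inf_negPart_eq_zero c
  have hnp (c : E) : c⁻ ⊓ c⁺ = 0 := inf_comm c⁺ c⁻ ▸ hpn c
  have hX₁ : (a⁺ * b⁺ + a⁻ * b⁻) ⊓ (a⁺ * b⁻) = 0 :=
    add_inf_eq_zero (mul_inf_mul_eq_zero hdisj (hpn b) (posPart_nonneg a) (posPart_nonneg a))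
      (by simpa only [mul_comm] using
        mul_inf_mul_eq_zero hdisj (hnp a) (negPart_nonneg b) (negPart_nonneg b))
  have hX₂ : (a⁺ * b⁺ + a⁻ * b⁻) ⊓ (a⁻ * b⁺) = 0 :=
    add_inf_eq_zero
      (by simpa only [mul_comm] using
        mul_inf_mul_eq_zero hdisj (hpn a) (posPart_nonneg b) (posPart_nonneg b))
      (mul_inf_mul_eq_zero hdisj (hnp b) (negPart_nonneg a) (negPart_nonneg a))
  have hXY : (a⁺ * b⁺ + a⁻ * b⁻) ⊓ (a⁺ * b⁻ + a⁻ * b⁺) = 0 := by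
    rw [inf_comm] at hX₁ hX₂ ⊢
    exact add_inf_eq_zero hX₁ hX₂
  have hab : a * b = (a⁺ * b⁺ + a⁻ * b⁻) - (a⁺ * b⁻ + a⁻ * b⁺) := by
    conv_lhs => rw [← posPart_sub_negPart a, ← posPart_sub_negPart b]
    ring
  rw [hab, abs_sub_of_inf_eq_zero hXY, ← posPart_add_negPart a, ← posPart_add_negPart b]
  ring

end FAlgebra

section ConditionalExpectation

variable {E : Type*} [Lattice E] [AddCommGroup E] [AddLeftMono E] [Module ℝ E] {T : E →ₗ[ℝ] E}

lemma abs_apply_le_apply_abs (hTpos : ∀ f : E, 0 ≤ f → 0 ≤ T f) (f : E) : |T f| ≤ T |f| := by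
  have hmono := monotone_of_map_nonneg T hTpos
  rw [abs_le', ← map_neg]
  exact ⟨hmono (le_abs_self f), hmono (neg_le_abs f)⟩

lemma apply_abs_of_mem_range (hTpos : ∀ f : E, 0 ≤ f → 0 ≤ T f)
    (hTproj : ∀ f : E, T (T f) = T f) (hTsp : ∀ f : E, T |f| = 0 → f = 0)
    {g : E} (hg : g ∈ Set.range T) : T |g| = |g| := by
  obtain ⟨x, rfl⟩ := hg
  have hle : |T x| ≤ T |T x| := by
    simpa only [hTproj] using abs_apply_le_apply_abs hTpos (T x)
  refine sub_eq_zero.1 (hTsp _ ?_)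
  rw [abs_of_nonneg (sub_nonneg.2 hle), map_sub, hTproj, sub_self]

end ConditionalExpectation

theorem T_abs_is_RT_valued_norm_general {E : Type*} [Lattice E] [CommRing E]
    [CovariantClass E E (· + ·) (· ≤ ·)] [Module ℝ E]
    -- f-algebra structure on the ambient space
    (hfalg : ∀ a b : E, a ⊓ b = 0 → ∀ w : E, 0 ≤ w → (w * a) ⊓ b = 0 ∧ (a * w) ⊓ b = 0)
    (T : E →ₗ[ℝ] E)
    -- T is positive
    (hTpos : ∀ f : E, 0 ≤ f → 0 ≤ T f)
    -- T is a projection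
    (hTproj : ∀ f : E, T (T f) = T f)
    -- T is strictly positive
    (hTsp : ∀ f : E, T |f| = 0 → f = 0)
    -- T is an averaging operator
    (hTav : ∀ g f : E, g ∈ Set.range T → T (g * f) = g * T f) :
    (∀ f : E, T |f| = 0 ↔ f = 0) ∧
    (∀ f : E, T |f| ∈ Set.range T ∧ 0 ≤ T |f|) ∧
    (∀ g f : E, g ∈ Set.range T → T |g * f| = |g| * T |f|) ∧
    (∀ f h : E, T |f + h| ≤ T |f| + T |h|) := by
  have hmono := monotone_of_map_nonneg T hTpos
  refine ⟨fun f => ⟨hTsp f, ?_⟩, fun f => ⟨⟨|f|, rfl⟩, hTpos _ (abs_nonneg f)⟩, ?_, ?_⟩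
  · rintro rfl
    simp
  · intro g f hg
    have habs_mem : |g| ∈ Set.range T := ⟨|g|, apply_abs_of_mem_range hTpos hTproj hTsp hg⟩
    rw [abs_mul_of_mul_inf_eq_zero (fun a b hab w hw => (hfalg a b hab w hw).1),
      hTav |g| |f| habs_mem]
  · intro f h
    rw [← map_add]
    exact hmono (abs_add_le f h)

/-- If `T` is a strictly positive, order-continuous, averaging conditional
expectation operator on a Riesz space `E` which is an `R(T)`-module, then `f ↦ T|f|`
is an `R(T)`-valued norm: it vanishes only at `0`, satisfies `T|g·f| = |g|·T|f|` for
`g ∈ R(T)`, and satisfies the triangle inequality. -/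
theorem T_abs_is_RT_valued_norm {E : Type*} [Lattice E] [CommRing E]
    [CovariantClass E E (· + ·) (· ≤ ·)] [Module ℝ E]
    -- f-algebra structure on the ambient space
    (hmulpos : ∀ a b : E, 0 ≤ a → 0 ≤ b → 0 ≤ a * b)
    (hfalg : ∀ a b : E, a ⊓ b = 0 → ∀ w : E, 0 ≤ w → (w * a) ⊓ b = 0 ∧ (a * w) ⊓ b = 0)
    (T : E →ₗ[ℝ] E)
    -- T is positive
    (hTpos : ∀ f : E, 0 ≤ f → 0 ≤ T f)
    -- T is a projection
    (hTproj : ∀ f : E, T (T f) = T f)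
    -- T is strictly positive
    (hTsp : ∀ f : E, T |f| = 0 → f = 0)
    -- T is order continuous
    (hToc : ∀ (A : Set E) (a : E), A.Nonempty → DirectedOn (· ≤ ·) A → IsLUB A a →
      IsLUB (T '' A) (T a))
    -- T is an averaging operator
    (hTav : ∀ g f : E, g ∈ Set.range T → T (g * f) = g * T f) :
    (∀ f : E, T |f| = 0 ↔ f = 0) ∧
    (∀ f : E, T |f| ∈ Set.range T ∧ 0 ≤ T |f|) ∧
    (∀ g f : E, g ∈ Set.range T → T |g * f| = |g| * T |f|) ∧
    (∀ f h : E, T |f + h| ≤ T |f| + T |h|) :=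
  T_abs_is_RT_valued_norm_general hfalg T hTpos hTproj hTsp hTav
end

section
/- Let T, U, V be pairwise compatible conditional expectation operators on a T-universally complete Riesz space E with weak order unit e = Te, and suppose U, V are averaging operators fixing R(T). Then α_T(U,V) ≤ φ_T(U,V), where α_T(U,V) = sup{|TPQe − TPe·TQe| : P ∈ B(U), Q ∈ B(V)} and φ_T(U,V) = sup_{Q ∈ B(V)} ‖UQe − TQe‖_{T,∞}. -/
/-!
Write `p = P e` and `q = Q e`. In the f-algebra `E` a band projection acts as multiplication by
its value at the unit, so `T (P q) = T (p * q) = T (p * U q)` because `p ∈ R(U)` and `T U = T`,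
while `T p * T q = T (p * T q)` by the averaging property of `T`. Hence
`T P Q e - T P e * T Q e = T (p * (U q - T q))`, and for every `g ∈ R(T)₊` dominating
`|U q - T q|`, positivity of `T` and `0 ≤ p ≤ e` give `|T (p * (U q - T q))| ≤ T (p * g) ≤ T g = g`.
-/

/-- A band projection on a Riesz space. -/
def IsBandProj {E : Type*} [ConditionallyCompleteLattice E] [AddCommGroup E] [Module ℝ E]
    (P : E →ₗ[ℝ] E) : Prop :=
  (∀ f : E, P (P f) = P f) ∧ ∀ f : E, 0 ≤ f → 0 ≤ P f ∧ P f ≤ f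

lemma abs_sub_le_of_nonneg_of_le' {G : Type*} [AddGroup G] [Lattice G] [AddLeftMono G]
    {a b n : G} (ha₀ : 0 ≤ a) (ha : a ≤ n) (hb₀ : 0 ≤ b) (hb : b ≤ n) : |a - b| ≤ n :=
  abs_le'.2 ⟨(sub_le_self a hb₀).trans ha, neg_sub a b ▸ (sub_le_self b ha₀).trans hb⟩

lemma abs_map_le_map_abs {E F G : Type*} [AddCommGroup E] [Lattice E] [IsOrderedAddMonoid E]
    [AddCommGroup F] [Lattice F] [IsOrderedAddMonoid F] [FunLike G E F] [AddMonoidHomClass G E F]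
    {T : G} (hT : ∀ f, 0 ≤ f → 0 ≤ T f) (f : E) : |T f| ≤ T |f| :=
  have hmono := (monotone_iff_map_nonneg T).2 hT
  abs_le'.2 ⟨hmono (le_abs_self f), map_neg T f ▸ hmono (neg_le_abs f)⟩

lemma abs_mul_le_mul_abs {R : Type*} [Lattice R] [Ring R] [IsOrderedRing R] {p : R} (hp : 0 ≤ p)
    (d : R) : |p * d| ≤ p * |d| :=
  abs_le'.2 ⟨mul_le_mul_of_nonneg_left (le_abs_self d) hp,
    mul_neg p d ▸ mul_le_mul_of_nonneg_left (neg_le_abs d) hp⟩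

/-- `hfalg` is the defining property of an f-algebra. -/
lemma mul_eq_zero_of_inf_eq_zero {R : Type*} [Lattice R] [CommRing R]
    (hfalg : ∀ a b : R, a ⊓ b = 0 → ∀ w : R, 0 ≤ w → (w * a) ⊓ b = 0)
    {a b : R} (hab : a ⊓ b = 0) : a * b = 0 := by
  have ha : 0 ≤ a := hab ▸ inf_le_left
  have hb : 0 ≤ b := hab ▸ inf_le_right
  have hab_a : (a * b) ⊓ a = 0 := hfalg b a (inf_comm a b ▸ hab) a ha
  have hab_ab : (b * a) ⊓ (a * b) = 0 := hfalg a (a * b) (inf_comm (a * b) a ▸ hab_a) b hb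
  rwa [mul_comm b a, inf_idem] at hab_ab

namespace IsBandProj

section AddGroup

variable {E : Type*} [ConditionallyCompleteLattice E] [AddCommGroup E] [Module ℝ E]
  {P : E →ₗ[ℝ] E}

lemma zero : IsBandProj (0 : E →ₗ[ℝ] E) :=
  ⟨fun _ => rfl, fun _ hf => ⟨le_rfl, hf⟩⟩

lemma map_nonneg (hP : IsBandProj P) {f : E} (hf : 0 ≤ f) : 0 ≤ P f := (hP.2 f hf).1

lemma map_le_self (hP : IsBandProj P) {f : E} (hf : 0 ≤ f) : P f ≤ f := (hP.2 f hf).2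

lemma monotone [IsOrderedAddMonoid E] (hP : IsBandProj P) : Monotone P :=
  (monotone_iff_map_nonneg P).2 fun _ => hP.map_nonneg

lemma le_map_self_of_le_map [IsOrderedAddMonoid E] (hP : IsBandProj P) {u f : E} (h : u ≤ P f) :
    u ≤ P u := by
  have := hP.map_le_self (sub_nonneg.2 h)
  rwa [map_sub, hP.1, sub_le_sub_iff_left] at this

lemma map_inf_eq_zero [IsOrderedAddMonoid E] (hP : IsBandProj P) {f g : E} (hf : 0 ≤ f)
    (hg : 0 ≤ g) (hPg : P g = 0) : P f ⊓ g = 0 := by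
  refine le_antisymm ?_ (le_inf (hP.map_nonneg hf) hg)
  calc P f ⊓ g ≤ P (P f ⊓ g) := hP.le_map_self_of_le_map inf_le_left
    _ ≤ P g := hP.monotone inf_le_right
    _ = 0 := hPg

end AddGroup

/-- `P q` is disjoint from `1 - P 1`, and `q - P q` from `P 1`, so in an f-algebra both
products vanish. -/
lemma map_eq_map_one_mul {E : Type*} [ConditionallyCompleteLattice E] [CommRing E]
    [IsOrderedAddMonoid E] [ZeroLEOneClass E] [Module ℝ E]
    (hfalg : ∀ a b : E, a ⊓ b = 0 → ∀ w : E, 0 ≤ w → (w * a) ⊓ b = 0)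
    {P : E →ₗ[ℝ] E} (hP : IsBandProj P) {q : E} (hq₀ : 0 ≤ q) :
    P q = P 1 * q := by
  have hP_sub : ∀ f, P (f - P f) = 0 := fun f => by rw [map_sub, hP.1, sub_self]
  have h₁ : P q * (1 - P 1) = 0 := mul_eq_zero_of_inf_eq_zero hfalg <|
    hP.map_inf_eq_zero hq₀ (sub_nonneg.2 (hP.map_le_self zero_le_one)) (hP_sub 1)
  have h₂ : P 1 * (q - P q) = 0 := mul_eq_zero_of_inf_eq_zero hfalg <|
    hP.map_inf_eq_zero zero_le_one (sub_nonneg.2 (hP.map_le_self hq₀)) (hP_sub q)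
  linear_combination h₁ - h₂

end IsBandProj

lemma map_eq_self_of_mem_range {E : Type*} [MulOneClass E] {T : E → E}
    (hTav : ∀ g f : E, g ∈ Set.range T → T (g * f) = g * T f)
    (hT₁ : T 1 = 1) {g : E} (hg : g ∈ Set.range T) : T g = g := by
  simpa [hT₁] using hTav g 1 hg

section ConditionalExpectation

variable {E : Type*} [CommRing E] [Module ℝ E]

lemma map_mul_sub_map_mul_map (T U : E →ₗ[ℝ] E)
    (hTav : ∀ g f : E, g ∈ Set.range T → T (g * f) = g * T f)
    (hUav : ∀ g f : E, g ∈ Set.range U → U (g * f) = g * U f) (hTU : ∀ f : E, T (U f) = T f)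
    {p : E} (hp : p ∈ Set.range U) (q : E) :
    T (p * q) - T p * T q = T (p * (U q - T q)) := by
  have hpq : T (p * q) = T (p * U q) := by rw [← hTU, hUav p q hp]
  have hpTq : T p * T q = T (p * T q) := by
    rw [mul_comm p, hTav _ _ ⟨q, rfl⟩, mul_comm]
  rw [hpq, hpTq, ← map_sub, ← mul_sub]

lemma abs_map_mul_le [Lattice E] [IsOrderedRing E] {T : E →ₗ[ℝ] E}
    (hTpos : ∀ f : E, 0 ≤ f → 0 ≤ T f) {p d g : E} (hp₀ : 0 ≤ p) (hp₁ : p ≤ 1) (hdg : |d| ≤ g)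
    (hTg : T g = g) : |T (p * d)| ≤ g := by
  have hmono := (monotone_iff_map_nonneg T).2 hTpos
  calc |T (p * d)| ≤ T |p * d| := abs_map_le_map_abs hTpos _
    _ ≤ T (p * |d|) := hmono (abs_mul_le_mul_abs hp₀ d)
    _ ≤ T (p * g) := hmono (mul_le_mul_of_nonneg_left hdg hp₀)
    _ ≤ T g := hmono (mul_le_of_le_one_left ((abs_nonneg d).trans hdg) hp₁)
    _ = g := hTg

lemma abs_map_sub_map_le_one [Lattice E] [IsOrderedAddMonoid E] {T U : E →ₗ[ℝ] E}
    (hTpos : ∀ f : E, 0 ≤ f → 0 ≤ T f) (hUpos : ∀ f : E, 0 ≤ f → 0 ≤ U f) (hT₁ : T 1 = 1)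
    (hU₁ : U 1 = 1) {q : E} (hq₀ : 0 ≤ q) (hq₁ : q ≤ 1) : |U q - T q| ≤ 1 :=
  abs_sub_le_of_nonneg_of_le' (hUpos q hq₀)
    (((monotone_iff_map_nonneg U).2 hUpos hq₁).trans_eq hU₁) (hTpos q hq₀)
    (((monotone_iff_map_nonneg T).2 hTpos hq₁).trans_eq hT₁)

end ConditionalExpectation

theorem alpha_le_phi_general {E : Type*} [ConditionallyCompleteLattice E] [CommRing E]
    [CovariantClass E E (· + ·) (· ≤ ·)] [Module ℝ E]
    (hmulpos : ∀ a b : E, 0 ≤ a → 0 ≤ b → 0 ≤ a * b)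
    (hfalg : ∀ a b : E, a ⊓ b = 0 → ∀ w : E, 0 ≤ w → (w * a) ⊓ b = 0 ∧ (a * w) ⊓ b = 0)
    (T U V : E →ₗ[ℝ] E)
    (hTpos : ∀ f : E, 0 ≤ f → 0 ≤ T f) (hUpos : ∀ f : E, 0 ≤ f → 0 ≤ U f)
    (hTU : ∀ f : E, T (U f) = T f) (hUT : ∀ f : E, U (T f) = T f)
    (e : E) (he : 0 ≤ e) (heunit : e = 1) (hTe : T e = e)
    (hTav : ∀ g f : E, g ∈ Set.range T → T (g * f) = g * T f)
    (hUav : ∀ g f : E, g ∈ Set.range U → U (g * f) = g * U f) :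
    sSup {x : E | ∃ P Q : E →ₗ[ℝ] E, IsBandProj P ∧ P e ∈ Set.range U ∧
          IsBandProj Q ∧ Q e ∈ Set.range V ∧ x = |T (P (Q e)) - T (P e) * T (Q e)|}
      ≤ sSup {x : E | ∃ Q : E →ₗ[ℝ] E, IsBandProj Q ∧ Q e ∈ Set.range V ∧
          x = sInf {g : E | g ∈ Set.range T ∧ 0 ≤ g ∧ |U (Q e) - T (Q e)| ≤ g}} := by
  subst heunit
  have : IsOrderedAddMonoid E := { add_le_add_left := fun _ _ h c => add_le_add_left h c }
  have : ZeroLEOneClass E := ⟨he⟩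
  have : IsOrderedRing E := .of_mul_nonneg hmulpos
  have hU₁ : U 1 = 1 := by rw [← hTe, hUT, hTe]
  have hdiff_le_one (Q : E →ₗ[ℝ] E) (hQ : IsBandProj Q) : |U (Q 1) - T (Q 1)| ≤ 1 :=
    abs_map_sub_map_le_one hTpos hUpos hTe hU₁ (hQ.map_nonneg zero_le_one)
      (hQ.map_le_self zero_le_one)
  refine csSup_le ⟨_, 0, 0, .zero, ⟨0, map_zero U⟩, .zero, ⟨0, map_zero V⟩, rfl⟩ ?_
  rintro _ ⟨P, Q, hP, hPU, hQ, hQV, rfl⟩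
  refine le_trans ?_ (le_csSup ?_ ⟨Q, hQ, hQV, rfl⟩)
  · refine le_csInf ⟨1, ⟨1, hTe⟩, zero_le_one, hdiff_le_one Q hQ⟩ ?_
    rintro g ⟨hgT, -, hg⟩
    rw [hP.map_eq_map_one_mul (fun a b h w hw => (hfalg a b h w hw).1)
      (hQ.map_nonneg zero_le_one), map_mul_sub_map_mul_map T U hTav hUav hTU hPU]
    exact abs_map_mul_le hTpos (hP.map_nonneg zero_le_one) (hP.map_le_self zero_le_one) hg
      (map_eq_self_of_mem_range hTav hTe hgT)
  · refine ⟨1, ?_⟩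
    rintro _ ⟨Q', hQ', -, rfl⟩
    exact csInf_le ⟨0, fun g hg => hg.2.1⟩ ⟨⟨1, hTe⟩, zero_le_one, hdiff_le_one Q' hQ'⟩

/-- For pairwise compatible conditional expectation operators `T, U, V`
(with `U, V` averaging operators fixing `R(T)`) on a `T`-universally complete Riesz space
with weak order unit `e = Te`, one has `α_T(U,V) ≤ φ_T(U,V)` where
`α_T(U,V) = sup {|TPQe − TPe·TQe| : P ∈ B(U), Q ∈ B(V)}` and
`φ_T(U,V) = sup_{Q ∈ B(V)} ‖UQe − TQe‖_{T,∞}`. -/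
theorem alpha_le_phi {E : Type*} [ConditionallyCompleteLattice E] [CommRing E]
    [CovariantClass E E (· + ·) (· ≤ ·)] [Module ℝ E]
    (hmulpos : ∀ a b : E, 0 ≤ a → 0 ≤ b → 0 ≤ a * b)
    (hfalg : ∀ a b : E, a ⊓ b = 0 → ∀ w : E, 0 ≤ w → (w * a) ⊓ b = 0 ∧ (a * w) ⊓ b = 0)
    (T U V : E →ₗ[ℝ] E)
    (hTpos : ∀ f : E, 0 ≤ f → 0 ≤ T f) (hUpos : ∀ f : E, 0 ≤ f → 0 ≤ U f)
    (hVpos : ∀ f : E, 0 ≤ f → 0 ≤ V f)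
    (hTproj : ∀ f : E, T (T f) = T f) (hUproj : ∀ f : E, U (U f) = U f)
    (hVproj : ∀ f : E, V (V f) = V f)
    (hTU : ∀ f : E, T (U f) = T f) (hUT : ∀ f : E, U (T f) = T f)
    (hTV : ∀ f : E, T (V f) = T f) (hVT : ∀ f : E, V (T f) = T f)
    (e : E) (he : 0 ≤ e) (heunit : e = 1) (hTe : T e = e)
    (hTav : ∀ g f : E, g ∈ Set.range T → T (g * f) = g * T f)
    (hUav : ∀ g f : E, g ∈ Set.range U → U (g * f) = g * U f)
    (hVav : ∀ g f : E, g ∈ Set.range V → V (g * f) = g * V f)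
    (hUfix : ∀ g ∈ Set.range T, U g = g) (hVfix : ∀ g ∈ Set.range T, V g = g) :
    sSup {x : E | ∃ P Q : E →ₗ[ℝ] E, IsBandProj P ∧ P e ∈ Set.range U ∧
          IsBandProj Q ∧ Q e ∈ Set.range V ∧ x = |T (P (Q e)) - T (P e) * T (Q e)|}
      ≤ sSup {x : E | ∃ Q : E →ₗ[ℝ] E, IsBandProj Q ∧ Q e ∈ Set.range V ∧
          x = sInf {g : E | g ∈ Set.range T ∧ 0 ≤ g ∧ |U (Q e) - T (Q e)| ≤ g}} :=
  alpha_le_phi_general hmulpos hfalg T U V hTpos hUpos hTU hUT e he heunit hTe hTav hUav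
end
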